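/- arXiv:1005.5705 — 5 statements merged into one kernel-verified Lean document; each statement's English description precedes it below -/
import Mathlib

section
/- The function s ↦ Γ(1+θ)Γ(1+θ−θs)/Γ(1+2θ−θs), for s ∈ [0,1], equals the probability generating function of a mixed Poisson random variable whose (random) Poisson parameter is distributed as θ|log(1−W)|, where W has the beta(θ,1) distribution. Equivalently, E[exp(−θ|log(1−W)|(1−s))] = Γ(1+θ)Γ(1+θ−θs)/(Γ(1+2θ−θs)) for all s ∈ [0,1]. -/
open MeasureTheory ProbabilityTheory Filter Set Real

lemma real_beta_aux {u v : ℝ} (hu : 0 < u) (hv : 0 < v) :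
    ∫ x in (0:ℝ)..1, x ^ (u - 1) * (1 - x) ^ (v - 1) =
      Real.Gamma u * Real.Gamma v / Real.Gamma (u + v) := by
  have key := Complex.Gamma_mul_Gamma_eq_betaIntegral (s := u) (t := v)
    (by simpa using hu) (by simpa using hv)
  have hbeta : Complex.betaIntegral u v =
      ((∫ x in (0:ℝ)..1, x ^ (u - 1) * (1 - x) ^ (v - 1) : ℝ) : ℂ) := by
    rw [Complex.betaIntegral, ← intervalIntegral.integral_ofReal]
    apply intervalIntegral.integral_congr
    intro x hx
    rw [uIcc_of_le zero_le_one] at hx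
    have h1 : (0:ℝ) ≤ x := hx.1
    have h2 : (0:ℝ) ≤ 1 - x := by linarith [hx.2]
    show (x:ℂ) ^ ((u:ℂ) - 1) * ((1:ℂ) - x) ^ ((v:ℂ) - 1) =
      ((x ^ (u - 1) * (1 - x) ^ (v - 1) : ℝ) : ℂ)
    rw [Complex.ofReal_mul, Complex.ofReal_cpow h1, Complex.ofReal_cpow h2]
    push_cast
    ring
  rw [hbeta, Complex.Gamma_ofReal, Complex.Gamma_ofReal, ← Complex.ofReal_add,
    Complex.Gamma_ofReal, ← Complex.ofReal_mul, ← Complex.ofReal_mul] at key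
  have : Real.Gamma u * Real.Gamma v = Real.Gamma (u + v) *
      ∫ x in (0:ℝ)..1, x ^ (u - 1) * (1 - x) ^ (v - 1) := by exact_mod_cast key
  have hG : Real.Gamma (u + v) ≠ 0 := (Real.Gamma_pos_of_pos (by linarith)).ne'
  field_simp
  linarith [this]

theorem mixed_poisson_pgf_beta
    {Ω : Type*} [MeasureSpace Ω] [IsProbabilityMeasure (ℙ : Measure Ω)]
    (θ : ℝ) (hθ : 0 < θ) (W : Ω → ℝ) (hmeas : Measurable W)
    (hdist : Measure.map W ℙ =
      (volume.restrict (Set.Ioo (0 : ℝ) 1)).withDensity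
        (fun x => ENNReal.ofReal (θ * x ^ (θ - 1)))) :
    ∀ s ∈ Set.Icc (0 : ℝ) 1,
      (∫ ω, Real.exp (-(θ * |Real.log (1 - W ω)| * (1 - s))) ∂ℙ) =
        Real.Gamma (1 + θ) * Real.Gamma (1 + θ - θ * s) / Real.Gamma (1 + 2 * θ - θ * s) := by
  intro s hs
  set g : ℝ → ℝ := fun x => Real.exp (-(θ * |Real.log (1 - x)| * (1 - s))) with hg
  have hgmeas : Measurable g := by
    apply Real.measurable_exp.comp
    apply Measurable.neg
    apply Measurable.mul _ measurable_const
    exact (measurable_const.mul ((Real.measurable_log.comp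
      (measurable_const.sub measurable_id)).abs))
  have h1 : (∫ ω, Real.exp (-(θ * |Real.log (1 - W ω)| * (1 - s))) ∂ℙ)
      = ∫ x, g x ∂(Measure.map W ℙ) := by
    rw [integral_map hmeas.aemeasurable hgmeas.aestronglyMeasurable]
  rw [h1, hdist]
  have hfm : Measurable (fun x : ℝ => (θ * x ^ (θ - 1)).toNNReal) := by
    apply Measurable.real_toNNReal
    measurability
  have h2 : ((volume.restrict (Set.Ioo (0 : ℝ) 1)).withDensity
        (fun x => ENNReal.ofReal (θ * x ^ (θ - 1))))
      = ((volume.restrict (Set.Ioo (0 : ℝ) 1)).withDensity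
        (fun x => ((θ * x ^ (θ - 1)).toNNReal : ENNReal))) := rfl
  rw [h2, integral_withDensity_eq_integral_smul hfm g]
  have h3 : ∫ x in Set.Ioo (0:ℝ) 1, (θ * x ^ (θ - 1)).toNNReal • g x
      = ∫ x in Set.Ioo (0:ℝ) 1, θ * x ^ (θ - 1) * (1 - x) ^ (θ * (1 - s)) := by
    apply setIntegral_congr_fun measurableSet_Ioo
    intro x hx
    have hx1 : 0 < x := hx.1
    have hx2 : 0 < 1 - x := by linarith [hx.2]
    have hd : 0 ≤ θ * x ^ (θ - 1) := by positivity
    have hlog : Real.log (1 - x) < 0 := Real.log_neg hx2 (by linarith [hx.1])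
    have habs : |Real.log (1 - x)| = -Real.log (1 - x) := abs_of_neg hlog
    simp only [NNReal.smul_def, Real.coe_toNNReal _ hd, smul_eq_mul, hg]
    rw [habs, Real.rpow_def_of_pos hx2]
    ring_nf
  rw [h3]
  have hIoo : ∫ x in Set.Ioo (0:ℝ) 1, θ * x ^ (θ - 1) * (1 - x) ^ (θ * (1 - s))
      = ∫ x in (0:ℝ)..1, θ * (x ^ (θ - 1) * (1 - x) ^ (θ * (1 - s))) := by
    rw [intervalIntegral.integral_of_le zero_le_one, ← integral_Ioc_eq_integral_Ioo]
    apply setIntegral_congr_fun measurableSet_Ioc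
    intro x _; ring
  rw [hIoo, intervalIntegral.integral_const_mul]
  have hv : 0 < 1 + θ - θ * s := by nlinarith [hs.1, hs.2]
  have hb := real_beta_aux hθ hv
  have hveq : (1 + θ - θ * s) - 1 = θ * (1 - s) := by ring
  rw [hveq] at hb
  rw [hb]
  have hsum : θ + (1 + θ - θ * s) = 1 + 2 * θ - θ * s := by ring
  rw [hsum]
  have hG1 : Real.Gamma (1 + θ) = θ * Real.Gamma θ := by
    rw [add_comm, Real.Gamma_add_one hθ.ne']
  rw [hG1]
  ring
end

section
/- Suppose W =_d 1−W on (0,1). Let (L_n)_{n≥0} be random variables satisfying L_0 = 0 and, for n ≥ 1, L_n =_d L_{Q*_n(1)} + 1_{{Q*_n(1)=n}}, where Q*_n(1) is independent of (L_k) and P{Q*_n(1)=m} = C(n,m)E[(1−W)^{n−m}W^m]. Then for every n ≥ 1, L_n is geometrically distributed with parameter 1/2: P{L_n = k} = 2^{−k−1} for all k ≥ 0. -/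
/-!
By the symmetry `W =_d 1 - W`, the jump chain leaves `n` for `0` and stays at `n` with the same
probability `a = E[W^n]`. If `L_m` is geometric(1/2) for `0 < m < n`, the law of `L_n` is therefore
`(1 - 2a) G + a δ₀ + a (law of L_n + 1)` with `G` the geometric(1/2) law. Since
`G = ½ δ₀ + ½ (G + 1)`, the law `G` solves this equation, and induction on `k` shows it is the
only solution.
-/

open MeasureTheory ProbabilityTheory Finset

section Recursion

variable {q p : ℕ → ℕ → ℝ}

theorem sum_range_mul_eq_of_forall_eq {n k : ℕ} {g : ℝ} (hn : 1 ≤ n)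
    (hsum : ∑ m ∈ range (n + 1), q n m = 1) (hq0 : q n 0 = q n n)
    (hp : ∀ m, 1 ≤ m → m < n → p m k = g) :
    ∑ m ∈ range n, q n m * p m k = (1 - 2 * q n n) * g + q n n * p 0 k := by
  obtain ⟨N, rfl⟩ : ∃ N, n = N + 1 := ⟨n - 1, by omega⟩
  have hmiddle : ∑ i ∈ range N, q (N + 1) (i + 1) = 1 - 2 * q (N + 1) (N + 1) := by
    rw [sum_range_succ, sum_range_succ'] at hsum
    linarith
  rw [sum_range_succ', sum_congr rfl fun i hi => by rw [hp (i + 1) (by omega) (by simpa using hi)],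
    ← sum_mul, hmiddle, hq0]

theorem eq_inv_two_pow_of_recursion (hsum : ∀ n, ∑ m ∈ range (n + 1), q n m = 1)
    (hq0 : ∀ n, q n 0 = q n n) (hp0 : p 0 0 = 1) (hp0' : ∀ k, k ≠ 0 → p 0 k = 0)
    (hrec : ∀ n, 1 ≤ n → ∀ k,
      p n k = (∑ m ∈ range n, q n m * p m k) + q n n * (if k = 0 then 0 else p n (k - 1))) :
    ∀ n, 1 ≤ n → ∀ k, p n k = (2 : ℝ)⁻¹ ^ (k + 1) := by
  intro n
  induction n using Nat.strong_induction_on with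
  | _ n ih =>
    intro hn k
    have hmix : ∀ k, ∑ m ∈ range n, q n m * p m k
        = (1 - 2 * q n n) * (2 : ℝ)⁻¹ ^ (k + 1) + q n n * p 0 k := fun k =>
      sum_range_mul_eq_of_forall_eq hn (hsum n) (hq0 n) fun m hm hmn => ih m hmn hm k
    induction k with
    | zero =>
      rw [hrec n hn, hmix, hp0, if_pos rfl]
      ring
    | succ k ih_k =>
      rw [hrec n hn, hmix, hp0' _ k.succ_ne_zero, if_neg k.succ_ne_zero, Nat.add_sub_cancel, ih_k]
      ring

end Recursion

section Bernstein

variable {Ω : Type*} [MeasurableSpace Ω] {μ : Measure Ω} {W : Ω → ℝ}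

theorem integrable_one_sub_pow_mul_pow [IsFiniteMeasure μ] (hW : AEMeasurable W μ)
    (hval : ∀ᵐ ω ∂μ, W ω ∈ Set.Icc (0 : ℝ) 1) (a b : ℕ) :
    Integrable (fun ω => (1 - W ω) ^ a * W ω ^ b) μ := by
  refine Integrable.mono' (integrable_const (1 : ℝ))
    (((aemeasurable_const.sub hW).pow_const a).mul (hW.pow_const b)).aestronglyMeasurable ?_
  filter_upwards [hval] with ω ⟨h0, h1⟩
  rw [Real.norm_eq_abs, abs_of_nonneg (by positivity)]
  exact mul_le_one₀ (pow_le_one₀ (by linarith) (by linarith)) (by positivity) (pow_le_one₀ h0 h1)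

theorem sum_choose_mul_integral_one_sub_pow_mul_pow [IsProbabilityMeasure μ]
    (hW : AEMeasurable W μ) (hval : ∀ᵐ ω ∂μ, W ω ∈ Set.Icc (0 : ℝ) 1) (n : ℕ) :
    ∑ m ∈ range (n + 1), (n.choose m : ℝ) * ∫ ω, (1 - W ω) ^ (n - m) * W ω ^ m ∂μ = 1 := by
  simp_rw [← integral_const_mul]
  rw [← integral_finsetSum _ fun m _ =>
    (integrable_one_sub_pow_mul_pow hW hval (n - m) m).const_mul _]
  have hbinomial : ∀ ω, ∑ m ∈ range (n + 1),
      (n.choose m : ℝ) * ((1 - W ω) ^ (n - m) * W ω ^ m) = 1 := fun ω => by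
    have h := add_pow (W ω) (1 - W ω) n
    rw [add_sub_cancel, one_pow] at h
    exact (sum_congr rfl fun m _ => by ring).trans h.symm
  simp [hbinomial]

theorem integral_one_sub_pow_eq_integral_pow (hW : AEMeasurable W μ)
    (hsym : μ.map W = μ.map (fun ω => 1 - W ω)) (n : ℕ) :
    ∫ ω, (1 - W ω) ^ n ∂μ = ∫ ω, W ω ^ n ∂μ := by
  have hpow {ν : Measure ℝ} : AEStronglyMeasurable (fun x : ℝ => x ^ n) ν :=
    (continuous_pow n).aestronglyMeasurable
  rw [← integral_map (φ := fun ω => 1 - W ω) (aemeasurable_const.sub hW) hpow, ← hsym,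
    integral_map hW hpow]

end Bernstein

/-- If `W =_d 1 - W` on `(0,1)`, the number of empty boxes `L_n` of the Bernoulli
sieve, whose laws `p n ·` satisfy the recursion driven by the jump chain
`Q*_n(1)` with law `q n m = C(n,m) E[(1-W)^{n-m} W^m]`, is geometric(1/2) for
every `n ≥ 1`. -/
theorem symmetric_W_empty_boxes_geometric
    {Ω : Type*} [MeasureSpace Ω] [IsProbabilityMeasure (ℙ : Measure Ω)]
    (W : Ω → ℝ) (hmeas : Measurable W)
    (hval : ∀ᵐ ω ∂ℙ, W ω ∈ Set.Ioo (0 : ℝ) 1)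
    (hsym : Measure.map W ℙ = Measure.map (fun ω => 1 - W ω) ℙ)
    (q : ℕ → ℕ → ℝ)
    (hq : ∀ n m, q n m = (n.choose m : ℝ) * ∫ ω, (1 - W ω) ^ (n - m) * (W ω) ^ m ∂ℙ)
    (p : ℕ → ℕ → ℝ)
    (hp0 : p 0 0 = 1) (hp0' : ∀ k, k ≠ 0 → p 0 k = 0)
    (hrec : ∀ n, 1 ≤ n → ∀ k,
      p n k = (∑ m ∈ Finset.range n, q n m * p m k) +
        q n n * (if k = 0 then 0 else p n (k - 1))) :
    ∀ n, 1 ≤ n → ∀ k : ℕ, p n k = (2 : ℝ)⁻¹ ^ (k + 1) := by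
  have hval' : ∀ᵐ ω ∂ℙ, W ω ∈ Set.Icc (0 : ℝ) 1 :=
    hval.mono fun _ h => Set.Ioo_subset_Icc_self h
  have hsum (n : ℕ) : ∑ m ∈ range (n + 1), q n m = 1 := by
    simp_rw [hq]
    exact sum_choose_mul_integral_one_sub_pow_mul_pow hmeas.aemeasurable hval' n
  have hq0 (n : ℕ) : q n 0 = q n n := by
    simp [hq, integral_one_sub_pow_eq_integral_pow hmeas.aemeasurable hsym n]
  exact eq_inv_two_pow_of_recursion hsum hq0 hp0 hp0' hrec
end

section
/- Let (s_n) be a sequence of reals and (c_{nm}) a nonnegative array with (i) lim_{n→∞} c_{nm} = 0 for each fixed m, and (ii) lim_{n→∞} ∑_{m=1}^n c_{nm} = 1. Set t_n = ∑_{m=1}^n c_{nm} s_m. Then liminf_n s_n ≤ liminf_n t_n ≤ limsup_n t_n ≤ limsup_n s_n (with values in the extended reals). -/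
/-!
Write `t_n = ∑ c_{nm} (s_m - L) + L ∑ c_{nm}`. If `s_m ≤ L` for all `m > N`, the terms of the
first sum with `m > N` are nonpositive, those with `m ≤ N` tend to `0` by column convergence, and
the second sum tends to `L`; hence `limsup t ≤ L` for every real `L > limsup s`. The `liminf`
inequality is the `limsup` one applied to `-s`.
-/

open Filter Finset Topology

noncomputable def toeplitzTransform (c : ℕ → ℕ → ℝ) (s : ℕ → ℝ) (n : ℕ) : ℝ :=
  ∑ m ∈ Icc 1 n, c n m * s m

section

variable {c : ℕ → ℕ → ℝ} {s : ℕ → ℝ}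

lemma toeplitzTransform_neg : toeplitzTransform c (-s) = -toeplitzTransform c s := by
  ext n
  simp [toeplitzTransform]

lemma toeplitzTransform_le_of_tail_le (hc : ∀ n m, 0 ≤ c n m) {L : ℝ} {N n : ℕ}
    (hs : ∀ m, N < m → s m ≤ L) (hn : N ≤ n) :
    toeplitzTransform c s n ≤
      ∑ m ∈ Icc 1 N, c n m * (s m - L) + L * ∑ m ∈ Icc 1 n, c n m := by
  have hsplit : toeplitzTransform c s n =
      ∑ m ∈ Icc 1 n, c n m * (s m - L) + L * ∑ m ∈ Icc 1 n, c n m := by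
    simp only [toeplitzTransform, mul_sub, sum_sub_distrib, ← sum_mul]
    ring
  rw [hsplit, add_le_add_iff_right]
  refine sum_le_sum_of_subset_of_nonpos' (Icc_subset_Icc_right hn) fun m hm hmN => ?_
  have hNm : N < m := by simp only [mem_Icc] at hm hmN; omega
  exact mul_nonpos_of_nonneg_of_nonpos (hc n m) (sub_nonpos.2 (hs m hNm))

lemma limsup_toeplitzTransform_le_of_eventually_le (hc : ∀ n m, 0 ≤ c n m)
    (h1 : ∀ m, Tendsto (fun n => c n m) atTop (𝓝 0))
    (h2 : Tendsto (fun n => ∑ m ∈ Icc 1 n, c n m) atTop (𝓝 1))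
    {L : ℝ} (hs : ∀ᶠ m in atTop, s m ≤ L) :
    limsup (fun n => (toeplitzTransform c s n : EReal)) atTop ≤ L := by
  obtain ⟨N, hN⟩ := eventually_atTop.1 hs
  have head : Tendsto (fun n => ∑ m ∈ Icc 1 N, c n m * (s m - L)) atTop (𝓝 0) := by
    simpa using tendsto_finsetSum (Icc 1 N) fun m _ => (h1 m).mul_const (s m - L)
  have bound : Tendsto
      (fun n => ∑ m ∈ Icc 1 N, c n m * (s m - L) + L * ∑ m ∈ Icc 1 n, c n m) atTop (𝓝 L) := by
    simpa using head.add (h2.const_mul L)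
  calc limsup (fun n => (toeplitzTransform c s n : EReal)) atTop
      ≤ limsup (fun n =>
          ((∑ m ∈ Icc 1 N, c n m * (s m - L) + L * ∑ m ∈ Icc 1 n, c n m : ℝ) : EReal)) atTop := by
        refine limsup_le_limsup ?_
        filter_upwards [eventually_ge_atTop N] with n hn
        exact EReal.coe_le_coe (toeplitzTransform_le_of_tail_le hc (fun m hm => hN m hm.le) hn)
    _ = L := ((continuous_coe_real_ereal.tendsto L).comp bound).limsup_eq

lemma limsup_toeplitzTransform_le (hc : ∀ n m, 0 ≤ c n m)
    (h1 : ∀ m, Tendsto (fun n => c n m) atTop (𝓝 0))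
    (h2 : Tendsto (fun n => ∑ m ∈ Icc 1 n, c n m) atTop (𝓝 1)) :
    limsup (fun n => (toeplitzTransform c s n : EReal)) atTop ≤
      limsup (fun n => (s n : EReal)) atTop := by
  refine EReal.le_of_forall_lt_iff_le.1 fun L hL =>
    limsup_toeplitzTransform_le_of_eventually_le hc h1 h2 ?_
  filter_upwards [eventually_lt_of_limsup_lt hL] with n h using (EReal.coe_lt_coe_iff.1 h).le

lemma liminf_le_liminf_toeplitzTransform (hc : ∀ n m, 0 ≤ c n m)
    (h1 : ∀ m, Tendsto (fun n => c n m) atTop (𝓝 0))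
    (h2 : Tendsto (fun n => ∑ m ∈ Icc 1 n, c n m) atTop (𝓝 1)) :
    liminf (fun n => (s n : EReal)) atTop ≤
      liminf (fun n => (toeplitzTransform c s n : EReal)) atTop := by
  have h := limsup_toeplitzTransform_le (s := -s) hc h1 h2
  simp only [toeplitzTransform_neg, Pi.neg_apply, EReal.coe_neg] at h
  rwa [← Pi.neg_def, ← Pi.neg_def, EReal.limsup_neg, EReal.limsup_neg,
    EReal.neg_le_neg_iff] at h

end

theorem toeplitz_schur_liminf_limsup
    (s : ℕ → ℝ) (c : ℕ → ℕ → ℝ) (hc : ∀ n m, 0 ≤ c n m)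
    (h1 : ∀ m, Tendsto (fun n => c n m) atTop (nhds 0))
    (h2 : Tendsto (fun n => ∑ m ∈ Finset.Icc 1 n, c n m) atTop (nhds 1))
    (t : ℕ → ℝ) (ht : ∀ n, t n = ∑ m ∈ Finset.Icc 1 n, c n m * s m) :
    liminf (fun n => (s n : EReal)) atTop ≤ liminf (fun n => (t n : EReal)) atTop ∧
    liminf (fun n => (t n : EReal)) atTop ≤ limsup (fun n => (t n : EReal)) atTop ∧
    limsup (fun n => (t n : EReal)) atTop ≤ limsup (fun n => (s n : EReal)) atTop := by
  obtain rfl : t = toeplitzTransform c s := funext ht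
  exact ⟨liminf_le_liminf_toeplitzTransform hc h1 h2, liminf_le_limsup,
    limsup_toeplitzTransform_le hc h1 h2⟩
end

section
/- Let φ(t) = E[e^{−t(1−W)}] with W ∈ (0,1) a.s. and ν = E|log(1−W)| = ∞. Then the function t ↦ ∫_1^t φ(u)/u du is slowly varying at infinity and tends to +∞ as t → ∞. -/
/-!
Write `L t = ∫_1^t φ(u)/u du`. By Tonelli, `∫_1^∞ φ(u)/u du = E ∫_1^∞ e^{-u(1-W)}/u du`, and
restricting the inner integral to `u ≤ 1/(1-W)`, where `e^{-u(1-W)} ≥ e⁻¹`, bounds it below by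
`e⁻¹ E[-log(1-W)] = ∞`; so `L t → ∞`. Since `0 ≤ φ ≤ 1`, the increment
`L(λt) - L(t) = ∫_t^{λt} φ(u)/u du` is at most `|log λ|` in absolute value, which is negligible
against `L t`.
-/

open MeasureTheory ProbabilityTheory Filter Set Real

open Asymptotics in
theorem tendsto_div_nhds_one_of_abs_sub_le {α : Type*} {l : Filter α} {f g : α → ℝ} {c : ℝ}
    (hg : Tendsto g l atTop) (hfg : ∀ᶠ x in l, |f x - g x| ≤ c) :
    Tendsto (fun x => f x / g x) l (nhds 1) := by
  have hbdd : (f - g) =O[l] (fun _ => (1 : ℝ)) :=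
    IsBigO.of_bound c (hfg.mono fun x hx => by simpa using hx)
  have hlo : (f - g) =o[l] g :=
    hbdd.trans_isLittleO ((isLittleO_one_left_iff ℝ).2 (tendsto_abs_atTop_atTop.comp hg))
  exact (isEquivalent_iff_tendsto_one (hg.eventually_ne_atTop 0)).1 hlo

theorem tendsto_integral_Ioc_atTop_of_not_integrableOn {f : ℝ → ℝ} {a : ℝ}
    (hf : ∀ u ∈ Ioi a, 0 ≤ f u) (hfi : ∀ t, IntegrableOn f (Ioc a t))
    (hf_not : ¬ IntegrableOn f (Ioi a)) :
    Tendsto (fun t => ∫ u in Ioc a t, f u) atTop atTop := by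
  have hnonneg : ∀ t, 0 ≤ᵐ[volume.restrict (Ioc a t)] f := fun t =>
    (ae_restrict_iff' measurableSet_Ioc).2 (ae_of_all _ fun u hu => hf u hu.1)
  have hmono : Monotone fun t => ∫ u in Ioc a t, f u := fun s t hst =>
    setIntegral_mono_set (hfi t) (hnonneg t) (Ioc_subset_Ioc_right hst).eventuallyLE
  refine tendsto_atTop_atTop_of_monotone hmono fun C => ?_
  by_contra! hC
  refine hf_not (integrableOn_Ioi_of_intervalIntegral_norm_bounded C a hfi tendsto_id ?_)
  filter_upwards [eventually_ge_atTop a] with t ht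
  rw [intervalIntegral.integral_of_le ht]
  calc ∫ u in Ioc a t, ‖f u‖ = ∫ u in Ioc a t, f u :=
        integral_congr_ae ((hnonneg t).mono fun u hu => Real.norm_of_nonneg hu)
    _ ≤ C := (hC t).le

section BoundedLogarithmicAverage

variable {f : ℝ → ℝ} {C : ℝ}

theorem intervalIntegrable_div_self (hfm : Measurable f) (hf : ∀ u, 1 ≤ u → |f u| ≤ C)
    {a b : ℝ} (ha : 1 ≤ a) (hb : 1 ≤ b) :
    IntervalIntegrable (fun u => f u / u) volume a b := by
  refine (intervalIntegrable_const (c := C)).mono_fun' (hfm.div measurable_id).aestronglyMeasurable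
    ((ae_restrict_iff' measurableSet_uIoc).2 (ae_of_all _ fun u hu => ?_))
  have hu : 1 ≤ u := (le_min ha hb).trans (uIoc_subset_uIcc hu).1
  change ‖f u / u‖ ≤ C
  rw [norm_div, Real.norm_eq_abs, Real.norm_eq_abs, abs_of_pos (show 0 < u by linarith)]
  exact (div_le_self (abs_nonneg _) hu).trans (hf u hu)

theorem abs_integral_Ioc_div_self_sub_le (hfm : Measurable f) (hf : ∀ u, 1 ≤ u → |f u| ≤ C)
    {a b : ℝ} (ha : 1 ≤ a) (hb : 1 ≤ b) :
    |(∫ u in Ioc 1 b, f u / u) - ∫ u in Ioc 1 a, f u / u| ≤ C * |log (b / a)| := by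
  have hC : 0 ≤ C := (abs_nonneg _).trans (hf 1 le_rfl)
  rw [← intervalIntegral.integral_of_le hb, ← intervalIntegral.integral_of_le ha,
    intervalIntegral.integral_interval_sub_left (intervalIntegrable_div_self hfm hf le_rfl hb)
      (intervalIntegrable_div_self hfm hf le_rfl ha)]
  calc |∫ u in a..b, f u / u| ≤ |∫ u in a..b, C * u⁻¹| := by
        refine intervalIntegral.norm_integral_le_abs_of_norm_le (f := fun u => f u / u)
          ((ae_restrict_iff' measurableSet_uIoc).2 (ae_of_all _ fun u hu => ?_))
          ((intervalIntegral.intervalIntegrable_inv (fun u hu => ?_)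
            continuousOn_id).const_mul C : IntervalIntegrable _ volume a b)
        · have hu : 1 ≤ u := (le_min ha hb).trans (uIoc_subset_uIcc hu).1
          rw [norm_div, Real.norm_eq_abs, Real.norm_eq_abs, abs_of_pos (show 0 < u by linarith),
            div_eq_mul_inv]
          exact mul_le_mul_of_nonneg_right (hf u hu) (inv_nonneg.2 (by linarith))
        · have hu : 1 ≤ u := (le_min ha hb).trans hu.1
          positivity
    _ = C * |log (b / a)| := by
        rw [intervalIntegral.integral_const_mul, integral_inv_of_pos (by linarith) (by linarith),
          abs_mul, abs_of_nonneg hC]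

theorem tendsto_integral_Ioc_div_self_ratio (hfm : Measurable f)
    (hf : ∀ u, 1 ≤ u → |f u| ≤ C)
    (hL : Tendsto (fun t => ∫ u in Ioc 1 t, f u / u) atTop atTop) {lam : ℝ} (hlam : 0 < lam) :
    Tendsto (fun t => (∫ u in Ioc 1 (lam * t), f u / u) / ∫ u in Ioc 1 t, f u / u)
      atTop (nhds 1) := by
  refine tendsto_div_nhds_one_of_abs_sub_le (c := C * |log lam|) hL ?_
  filter_upwards [eventually_ge_atTop 1, eventually_ge_atTop lam⁻¹] with t ht hlt
  have hlt : 1 ≤ lam * t := by rwa [← inv_mul_le_iff₀ hlam, mul_one]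
  calc _ ≤ C * |log (lam * t / t)| := abs_integral_Ioc_div_self_sub_le hfm hf ht hlt
    _ = C * |log lam| := by rw [mul_div_cancel_right₀ _ (by positivity)]

end BoundedLogarithmicAverage

theorem le_lintegral_Ioi_exp_neg_mul_div {x : ℝ} (hx0 : 0 < x) (hx1 : x ≤ 1) :
    ENNReal.ofReal (exp (-1)) * ENNReal.ofReal (-log x) ≤
      ∫⁻ u in Ioi 1, ENNReal.ofReal (exp (-(u * x)) / u) := by
  have hx : 1 ≤ x⁻¹ := one_le_inv₀ hx0 |>.2 hx1
  have hinv : IntervalIntegrable (fun u : ℝ => exp (-1) * u⁻¹) volume 1 x⁻¹ :=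
    (intervalIntegral.intervalIntegrable_inv (fun u hu => by
      have : 1 ≤ u := by simpa [hx] using hu.1
      positivity) continuousOn_id).const_mul _
  calc ENNReal.ofReal (exp (-1)) * ENNReal.ofReal (-log x)
      = ENNReal.ofReal (∫ u in 1..x⁻¹, exp (-1) * u⁻¹) := by
        rw [intervalIntegral.integral_const_mul, integral_inv_of_pos one_pos (by positivity),
          div_one, log_inv, ENNReal.ofReal_mul (exp_nonneg _)]
    _ = ∫⁻ u in Ioc 1 x⁻¹, ENNReal.ofReal (exp (-1) * u⁻¹) := by
        rw [intervalIntegral.integral_of_le hx]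
        exact ofReal_integral_eq_lintegral_ofReal hinv.1
          ((ae_restrict_iff' measurableSet_Ioc).2 (ae_of_all _ fun u hu => by
            have : 0 < u := one_pos.trans hu.1
            positivity))
    _ ≤ ∫⁻ u in Ioc 1 x⁻¹, ENNReal.ofReal (exp (-(u * x)) / u) := by
        refine setLIntegral_mono' measurableSet_Ioc fun u hu => ENNReal.ofReal_le_ofReal ?_
        have hu0 : 0 < u := one_pos.trans hu.1
        have hux : u * x ≤ 1 := by rw [← le_inv_mul_iff₀' hx0, mul_one]; exact hu.2
        rw [div_eq_mul_inv]
        gcongr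
    _ ≤ ∫⁻ u in Ioi 1, ENNReal.ofReal (exp (-(u * x)) / u) :=
        lintegral_mono_set Ioc_subset_Ioi_self

section LaplaceTransform

variable {Ω : Type*} [MeasurableSpace Ω] {μ : Measure Ω} {X : Ω → ℝ}

theorem integrable_exp_neg_mul [IsFiniteMeasure μ] (hXm : Measurable X)
    (hX : ∀ᵐ ω ∂μ, X ω ∈ Icc 0 1) (t : ℝ) :
    Integrable (fun ω => exp (-(t * X ω))) μ := by
  refine (integrable_const (exp |t|)).mono' (by fun_prop) (hX.mono fun ω hω => ?_)
  rw [Real.norm_of_nonneg (exp_nonneg _), exp_le_exp, neg_le]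
  calc -|t| ≤ -|t| * X ω := by nlinarith [abs_nonneg t, hω.1, hω.2]
    _ ≤ t * X ω := by nlinarith [neg_abs_le t, hω.1]

theorem antitone_integral_exp_neg_mul [IsFiniteMeasure μ] (hXm : Measurable X)
    (hX : ∀ᵐ ω ∂μ, X ω ∈ Icc 0 1) :
    Antitone fun t => ∫ ω, exp (-(t * X ω)) ∂μ := fun s t hst =>
  integral_mono_ae (integrable_exp_neg_mul hXm hX t) (integrable_exp_neg_mul hXm hX s)
    (hX.mono fun _ hω => exp_le_exp.2 (neg_le_neg (mul_le_mul_of_nonneg_right hst hω.1)))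

theorem integral_exp_neg_mul_le_one [IsProbabilityMeasure μ] (hX : ∀ᵐ ω ∂μ, 0 ≤ X ω) {t : ℝ}
    (ht : 0 ≤ t) : ∫ ω, exp (-(t * X ω)) ∂μ ≤ 1 := by
  calc ∫ ω, exp (-(t * X ω)) ∂μ ≤ ∫ _, 1 ∂μ :=
        integral_mono_of_nonneg (ae_of_all _ fun _ => exp_nonneg _) (integrable_const 1)
          (hX.mono fun _ hω => exp_le_one_iff.2 (neg_nonpos.2 (mul_nonneg ht hω)))
    _ = 1 := by simp

theorem lintegral_Ioi_integral_exp_neg_mul_div_eq_top [IsFiniteMeasure μ] (hXm : Measurable X)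
    (hX : ∀ᵐ ω ∂μ, X ω ∈ Ioc 0 1) (hlog : ¬ Integrable (fun ω => log (X ω)) μ) :
    ∫⁻ u in Ioi 1, ENNReal.ofReal ((∫ ω, exp (-(u * X ω)) ∂μ) / u) = ⊤ := by
  have hX' : ∀ᵐ ω ∂μ, X ω ∈ Icc 0 1 := hX.mono fun _ h => Ioc_subset_Icc_self h
  have hneglog : ∫⁻ ω, ENNReal.ofReal (-log (X ω)) ∂μ = ⊤ := by
    by_contra h
    refine hlog (integrable_neg_iff.1 ((lintegral_ofReal_ne_top_iff_integrable (by fun_prop)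
      (hX.mono fun ω hω => ?_)).1 h))
    exact neg_nonneg.2 (log_nonpos hω.1.le hω.2)
  refine top_unique ?_
  calc ⊤ = ∫⁻ ω, ENNReal.ofReal (exp (-1)) * ENNReal.ofReal (-log (X ω)) ∂μ := by
        rw [lintegral_const_mul' _ _ ENNReal.ofReal_ne_top, hneglog,
          ENNReal.mul_top (ENNReal.ofReal_pos.2 (exp_pos _)).ne']
    _ ≤ ∫⁻ ω, (∫⁻ u in Ioi 1, ENNReal.ofReal (exp (-(u * X ω)) / u)) ∂μ :=
        lintegral_mono_ae (hX.mono fun ω hω => le_lintegral_Ioi_exp_neg_mul_div hω.1 hω.2)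
    _ = ∫⁻ u in Ioi 1, (∫⁻ ω, ENNReal.ofReal (exp (-(u * X ω)) / u) ∂μ) :=
        lintegral_lintegral_swap (by fun_prop)
    _ = ∫⁻ u in Ioi 1, ENNReal.ofReal ((∫ ω, exp (-(u * X ω)) ∂μ) / u) := by
        refine setLIntegral_congr_fun measurableSet_Ioi fun u hu => ?_
        have hu : 0 < u := one_pos.trans hu
        rw [← integral_div, ofReal_integral_eq_lintegral_ofReal
          ((integrable_exp_neg_mul hXm hX' u).div_const u)
          (ae_of_all _ fun _ => by positivity)]

end LaplaceTransform

theorem integral_phi_slowly_varying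
    {Ω : Type*} [MeasureSpace Ω] [IsProbabilityMeasure (ℙ : Measure Ω)]
    (W : Ω → ℝ) (hmeas : Measurable W)
    (hval : ∀ᵐ ω ∂ℙ, W ω ∈ Set.Ioo (0 : ℝ) 1)
    (hν : ¬ Integrable (fun ω => Real.log (1 - W ω)) ℙ)
    (φ : ℝ → ℝ) (hφ : ∀ t, φ t = ∫ ω, Real.exp (-(t * (1 - W ω))) ∂ℙ) :
    Tendsto (fun t : ℝ => ∫ u in Set.Ioc (1 : ℝ) t, φ u / u) atTop atTop ∧
    ∀ lam > (0 : ℝ),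
      Tendsto (fun t : ℝ =>
          (∫ u in Set.Ioc (1 : ℝ) (lam * t), φ u / u) / ∫ u in Set.Ioc (1 : ℝ) t, φ u / u)
        atTop (nhds 1) := by
  obtain rfl : φ = fun t => ∫ ω, exp (-(t * (1 - W ω))) ∂ℙ := funext hφ
  have hXm : Measurable fun ω => 1 - W ω := measurable_const.sub hmeas
  have hX : ∀ᵐ ω ∂ℙ, 1 - W ω ∈ Ioc 0 1 :=
    hval.mono fun ω hω => ⟨by linarith [hω.2], by linarith [hω.1]⟩
  have hX' : ∀ᵐ ω ∂ℙ, 1 - W ω ∈ Icc 0 1 := hX.mono fun _ h => Ioc_subset_Icc_self h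
  have hφm := (antitone_integral_exp_neg_mul hXm hX').measurable
  have hφ_nonneg (t : ℝ) : 0 ≤ ∫ ω, exp (-(t * (1 - W ω))) ∂ℙ :=
    integral_nonneg fun _ => exp_nonneg _
  have hφ_le (u : ℝ) (hu : 1 ≤ u) : |∫ ω, exp (-(u * (1 - W ω))) ∂ℙ| ≤ 1 := by
    rw [abs_of_nonneg (hφ_nonneg u)]
    exact integral_exp_neg_mul_le_one (hX'.mono fun _ h => h.1) (by linarith)
  have hL := tendsto_integral_Ioc_atTop_of_not_integrableOn
    (fun u hu => div_nonneg (hφ_nonneg u) (one_pos.trans hu).le)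
    (fun t => (intervalIntegrable_div_self hφm hφ_le le_rfl (le_max_left 1 t)).1.mono_set
      (Ioc_subset_Ioc_right (le_max_right 1 t)))
    (fun hint => hint.lintegral_lt_top.ne
      (lintegral_Ioi_integral_exp_neg_mul_div_eq_top hXm hX hν))
  exact ⟨hL, fun lam hlam => tendsto_integral_Ioc_div_self_ratio hφm hφ_le hL hlam⟩
end

section
/- For the Bernoulli sieve with n balls, the expected number of empty boxes within the occupancy range admits the explicit binomial-alternating-sum formula E[L_n] = ∑_{k=1}^n (−1)^{k+1} C(n,k) (1 − E[(1−W)^k])/(1 − E[W^k]). -/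
open MeasureTheory ProbabilityTheory Filter Set

/-- Box of ball with mark `u`, for stick-breaking residuals `Q k = W_1 ⋯ W_k`:
the (1-based) index of the interval `(Q_k, Q_{k-1})` containing `u`. -/
noncomputable def sieveBox (W : ℕ → ℝ) (u : ℝ) : ℕ :=
  sInf {k : ℕ | ∏ i ∈ Finset.range k, W i < u}

/-- Index of the last occupied box (occupancy range) after `n` balls. -/
noncomputable def sieveM (W : ℕ → ℝ) (U : ℕ → ℝ) (n : ℕ) : ℕ :=
  (Finset.range n).sup (fun j => sieveBox W (U j))

/-- Number of occupied boxes after `n` balls. -/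
noncomputable def sieveK (W : ℕ → ℝ) (U : ℕ → ℝ) (n : ℕ) : ℕ :=
  ((Finset.range n).image (fun j => sieveBox W (U j))).card

/-- Number of empty boxes within the occupancy range after `n` balls. -/
noncomputable def sieveL (W : ℕ → ℝ) (U : ℕ → ℝ) (n : ℕ) : ℕ :=
  sieveM W U n - sieveK W U n


/-!
Write `Q_k = W_1 ⋯ W_k`, so that box `k + 1` is `(Q_{k+1}, Q_k]`. Almost surely every ball lies
in some box, and then `L_n` counts the `k` such that box `k + 1` is empty although not all balls
lie above `Q_k`. Since "all balls above `Q_k`" implies "box `k + 1` empty",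
`E L_n = ∑_k (P(box k + 1 empty) - P(all balls above Q_k))`. Given the `W`'s the balls are i.i.d.
uniform, so these probabilities are `E (1 - Q_k (1 - W_{k+1}))^n` and `E (1 - Q_k)^n`; expanding
binomially and using independence of the `W`'s turns them into
`∑_j C(n,j) (-1)^j m_j^k E(1 - W)^j` and `∑_j C(n,j) (-1)^j m_j^k` with `m_j = E W^j`, and the
geometric series in `k` give the formula. The second expression tends to `1`, which is the
almost sure statement used at the start.
-/

open scoped ENNReal Topology

section Sieve

variable {w u : ℕ → ℝ} {n : ℕ}

theorem antitone_prod_range (hw : ∀ i, w i ∈ Icc (0 : ℝ) 1) :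
    Antitone fun k => ∏ i ∈ Finset.range k, w i :=
  antitone_nat_of_succ_le fun k => by
    rw [Finset.prod_range_succ]
    exact mul_le_of_le_one_right (Finset.prod_nonneg fun i _ => (hw i).1) (hw k).2

theorem sieveBox_le_iff (hw : ∀ i, w i ∈ Icc (0 : ℝ) 1) {x : ℝ}
    (hx : ∃ k, ∏ i ∈ Finset.range k, w i < x) (m : ℕ) :
    sieveBox w x ≤ m ↔ ∏ i ∈ Finset.range m, w i < x :=
  ⟨fun h => (antitone_prod_range hw h).trans_lt (Nat.sInf_mem hx), fun h => Nat.sInf_le h⟩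

theorem sieveBox_eq_succ_iff (hw : ∀ i, w i ∈ Icc (0 : ℝ) 1) {x : ℝ}
    (hx : ∃ k, ∏ i ∈ Finset.range k, w i < x) (k : ℕ) :
    sieveBox w x = k + 1 ↔
      x ∈ Ioc ((∏ i ∈ Finset.range k, w i) * w k) (∏ i ∈ Finset.range k, w i) := by
  rw [← Finset.prod_range_succ, mem_Ioc, ← not_lt, ← sieveBox_le_iff hw hx,
    ← sieveBox_le_iff hw hx]
  omega

theorem one_le_sieveBox (hw : ∀ i, w i ∈ Icc (0 : ℝ) 1) {x : ℝ}
    (hx : ∃ k, ∏ i ∈ Finset.range k, w i < x) (hx1 : x ≤ 1) : 1 ≤ sieveBox w x := by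
  rw [Nat.one_le_iff_ne_zero, ne_eq, ← Nat.le_zero, sieveBox_le_iff hw hx]
  simpa using hx1

theorem lt_sup_sieveBox_iff (hw : ∀ i, w i ∈ Icc (0 : ℝ) 1)
    (hu : ∀ j < n, ∃ k, ∏ i ∈ Finset.range k, w i < u j) (k : ℕ) :
    k < (Finset.range n).sup (fun j => sieveBox w (u j)) ↔
      ¬ ∀ j < n, ∏ i ∈ Finset.range k, w i < u j := by
  simp only [Finset.lt_sup_iff, Finset.mem_range, not_forall, not_lt, exists_prop]
  exact exists_congr fun j => and_congr_right fun hj => by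
    rw [← not_le, sieveBox_le_iff hw (hu j hj), not_lt]

theorem succ_notMem_image_sieveBox_iff (hw : ∀ i, w i ∈ Icc (0 : ℝ) 1)
    (hu : ∀ j < n, ∃ k, ∏ i ∈ Finset.range k, w i < u j) (k : ℕ) :
    k + 1 ∉ (Finset.range n).image (fun j => sieveBox w (u j)) ↔
      ∀ j < n, u j ∉ Ioc ((∏ i ∈ Finset.range k, w i) * w k) (∏ i ∈ Finset.range k, w i) := by
  simp only [Finset.mem_image, Finset.mem_range, not_exists, not_and]
  exact forall₂_congr fun j hj => not_congr (sieveBox_eq_succ_iff hw (hu j hj) k)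

theorem Finset.sup_sub_card_image {s : Finset ℕ} {b : ℕ → ℕ} (hb : ∀ j ∈ s, 1 ≤ b j) :
    s.sup b - (s.image b).card =
      ((Finset.range (s.sup b)).filter fun k => k + 1 ∉ s.image b).card := by
  have hsub : s.image b ⊆ Finset.Icc 1 (s.sup b) := by
    intro m hm
    obtain ⟨j, hj, rfl⟩ := Finset.mem_image.1 hm
    exact Finset.mem_Icc.2 ⟨hb j hj, Finset.le_sup hj⟩
  have hcard : (Finset.Icc 1 (s.sup b)).card = s.sup b := by simp
  rw [← hcard, ← Finset.card_sdiff_of_subset hsub, hcard]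
  symm
  refine Finset.card_bij (fun k _ => k + 1) ?_ (fun _ _ _ _ => Nat.add_right_cancel) ?_
  · intro k hk
    simp only [Finset.mem_filter, Finset.mem_range] at hk
    simp only [Finset.mem_sdiff, Finset.mem_Icc]
    exact ⟨⟨by omega, by omega⟩, hk.2⟩
  · intro m hm
    simp only [Finset.mem_sdiff, Finset.mem_Icc] at hm
    refine ⟨m - 1, ?_, by omega⟩
    simp only [Finset.mem_filter, Finset.mem_range]
    refine ⟨by omega, ?_⟩
    rw [Nat.sub_add_cancel hm.1.1]
    exact hm.2

theorem sieveL_eq_tsum (hw : ∀ i, w i ∈ Icc (0 : ℝ) 1) (hu1 : ∀ j < n, u j ≤ 1)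
    (hu : ∀ j < n, ∃ k, ∏ i ∈ Finset.range k, w i < u j) :
    (sieveL w u n : ℝ≥0∞) = ∑' k : ℕ,
      if (∀ j < n, u j ∉ Ioc ((∏ i ∈ Finset.range k, w i) * w k) (∏ i ∈ Finset.range k, w i)) ∧
        ¬ ∀ j < n, ∏ i ∈ Finset.range k, w i < u j then 1 else 0 := by
  set b : ℕ → ℕ := fun j => sieveBox w (u j)
  set s := (Finset.range ((Finset.range n).sup b)).filter fun k => k + 1 ∉ (Finset.range n).image b
  have hL : sieveL w u n = s.card :=
    Finset.sup_sub_card_image fun j hj =>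
      one_le_sieveBox hw (hu j (Finset.mem_range.1 hj)) (hu1 j (Finset.mem_range.1 hj))
  simp_rw [← succ_notMem_image_sieveBox_iff hw hu, ← lt_sup_sieveBox_iff hw hu, and_comm,
    ← Finset.mem_range, hL]
  rw [tsum_eq_sum (s := s) fun k hk => if_neg (mt Finset.mem_filter.2 hk),
    Finset.sum_congr rfl fun k hk => if_pos (Finset.mem_filter.1 hk), Finset.sum_const, nsmul_one]

end Sieve

theorem tsum_sum_binomial_mul_geometric {a b : ℕ → ℝ} (n : ℕ) (ha0 : a 0 = 1)
    (hb : ∀ j ∈ Finset.Icc 1 n, 0 ≤ b j ∧ b j < 1) :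
    ∑' k : ℕ, (∑ j ∈ Finset.range (n + 1), n.choose j * (-1) ^ j * b j ^ k * a j -
        ∑ j ∈ Finset.range (n + 1), n.choose j * (-1) ^ j * b j ^ k) =
      ∑ j ∈ Finset.Icc 1 n, (-1) ^ (j + 1) * n.choose j * (1 - a j) / (1 - b j) := by
  have hrange : Finset.range (n + 1) = insert 0 (Finset.Icc 1 n) := by
    ext j
    simp only [Finset.mem_range, Finset.mem_insert, Finset.mem_Icc]
    omega
  have hterm : ∀ k : ℕ, ∑ j ∈ Finset.range (n + 1), n.choose j * (-1) ^ j * b j ^ k * a j -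
      ∑ j ∈ Finset.range (n + 1), n.choose j * (-1) ^ j * b j ^ k =
        ∑ j ∈ Finset.Icc 1 n, (-1) ^ (j + 1) * n.choose j * (1 - a j) * b j ^ k := by
    intro k
    rw [← Finset.sum_sub_distrib, hrange, Finset.sum_insert (by simp), ha0]
    simp only [mul_one, sub_self, zero_add]
    exact Finset.sum_congr rfl fun j _ => by ring
  simp_rw [hterm, div_eq_mul_inv]
  exact (hasSum_sum fun j hj =>
    (hasSum_geometric_of_lt_one (hb j hj).1 (hb j hj).2).mul_left _).tsum_eq

section Measure

variable {α : Type*} [MeasurableSpace α] {μ : Measure α}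

theorem integral_natCast_eq_tsum_measureReal [IsFiniteMeasure μ] {f : α → ℕ} {A : ℕ → Set α}
    (hA : ∀ k, MeasurableSet (A k)) (hf : ∀ᵐ x ∂μ, (f x : ℝ≥0∞) = ∑' k, (A k).indicator 1 x) :
    ∫ x, (f x : ℝ) ∂μ = ∑' k, μ.real (A k) := by
  have hind : ∀ k, Measurable ((A k).indicator (1 : α → ℝ≥0∞)) := fun k =>
    measurable_const.indicator (hA k)
  have hsum : Measurable fun x => ∑' k, (A k).indicator (1 : α → ℝ≥0∞) x := .tsum hind
  have hmeas : AEStronglyMeasurable (fun x => (f x : ℝ)) μ := by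
    refine hsum.ennreal_toReal.aestronglyMeasurable.congr ?_
    filter_upwards [hf] with x hx
    simp [← hx]
  rw [integral_eq_lintegral_of_nonneg_ae (ae_of_all _ fun _ => Nat.cast_nonneg _) hmeas]
  simp_rw [ENNReal.ofReal_natCast]
  rw [lintegral_congr_ae hf,
    lintegral_tsum (f := fun k => (A k).indicator 1) fun k => (hind k).aemeasurable,
    ENNReal.tsum_toReal_eq fun k => by simp [lintegral_indicator_one (hA k)]]
  simp [lintegral_indicator_one (hA _), measureReal_def]

theorem integrable_pow_of_ae_mem_Icc [IsFiniteMeasure μ] {f : α → ℝ}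
    (hf : AEStronglyMeasurable f μ) (hf01 : ∀ᵐ x ∂μ, f x ∈ Icc (0 : ℝ) 1) (j : ℕ) :
    Integrable (fun x => f x ^ j) μ :=
  .of_bound (hf.pow j) 1 (by
    filter_upwards [hf01] with x hx
    rw [Real.norm_eq_abs, abs_of_nonneg (pow_nonneg hx.1 j)]
    exact pow_le_one₀ hx.1 hx.2)

theorem integral_pow_lt_one [IsProbabilityMeasure μ] {f : α → ℝ} (hf : AEStronglyMeasurable f μ)
    (hf01 : ∀ᵐ x ∂μ, f x ∈ Ico (0 : ℝ) 1) {j : ℕ} (hj : j ≠ 0) : ∫ x, f x ^ j ∂μ < 1 := by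
  have hint := integrable_pow_of_ae_mem_Icc hf (hf01.mono fun _ hx => Ico_subset_Icc_self hx) j
  have hlt : ∀ᵐ x ∂μ, 0 < 1 - f x ^ j := by
    filter_upwards [hf01] with x hx
    exact sub_pos.2 (pow_lt_one₀ hx.1 hx.2 hj)
  have hpos : 0 < ∫ x, (1 - f x ^ j) ∂μ := by
    rw [integral_pos_iff_support_of_nonneg_ae (hlt.mono fun x hx => hx.le)
      ((integrable_const 1).sub hint)]
    refine pos_iff_ne_zero.2 fun h0 => ?_
    obtain ⟨x, hx, hx'⟩ := (hlt.and (measure_eq_zero_iff_ae_notMem.1 h0)).exists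
    exact hx' hx.ne'
  rw [integral_sub (integrable_const 1) hint] at hpos
  simp only [integral_const, probReal_univ, smul_eq_mul, mul_one] at hpos
  linarith

end Measure

instance : IsProbabilityMeasure (volume.restrict (Ioo (0 : ℝ) 1)) :=
  ⟨by simp⟩

theorem volume_restrict_Ioo_zero_one_Ioc {a b : ℝ} (ha : 0 ≤ a) (hb : b ≤ 1) :
    volume.restrict (Ioo (0 : ℝ) 1) (Ioc a b) = ENNReal.ofReal (b - a) := by
  have hae : (Ioc a b ∩ Ioo 0 1 : Set ℝ) =ᵐ[volume] (Ioo a b ∩ Ioo 0 1 : Set ℝ) :=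
    ae_eq_set_inter Ioo_ae_eq_Ioc.symm (ae_eq_refl _)
  rw [Measure.restrict_apply measurableSet_Ioc, measure_congr hae, Ioo_inter_Ioo, max_eq_left ha,
    min_eq_left hb, Real.volume_Ioo]

theorem volume_restrict_Ioo_zero_one_Ioi {a : ℝ} (ha : 0 ≤ a) :
    volume.restrict (Ioo (0 : ℝ) 1) (Ioi a) = ENNReal.ofReal (1 - a) := by
  rw [Measure.restrict_apply measurableSet_Ioi, Ioi_inter_Ioo, max_eq_left ha, Real.volume_Ioo]

theorem measurableSet_setOf_forall_mem {α β ι : Type*} [MeasurableSpace α] [MeasurableSpace β]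
    [Countable ι] {S : α → Set β} (hS : MeasurableSet {p : α × β | p.2 ∈ S p.1}) :
    MeasurableSet {p : α × (ι → β) | ∀ j, p.2 j ∈ S p.1} := by
  have : {p : α × (ι → β) | ∀ j, p.2 j ∈ S p.1} =
      ⋂ j, (fun p => (p.1, p.2 j)) ⁻¹' {p : α × β | p.2 ∈ S p.1} := by
    ext
    simp
  rw [this]
  exact .iInter fun j => (measurable_fst.prodMk ((measurable_pi_apply j).comp measurable_snd)) hS

theorem Measure.prod_pi_setOf_forall_mem {α β : Type*} [MeasurableSpace α] [MeasurableSpace β]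
    (μ : Measure α) [SFinite μ] (ν : Measure β) [SigmaFinite ν] (n : ℕ) {S : α → Set β}
    (hS : MeasurableSet {p : α × β | p.2 ∈ S p.1}) :
    (μ.prod (Measure.pi fun _ : Fin n => ν)) {p | ∀ j, p.2 j ∈ S p.1} =
      ∫⁻ x, ν (S x) ^ n ∂μ := by
  rw [Measure.prod_apply (measurableSet_setOf_forall_mem hS)]
  refine lintegral_congr fun x => ?_
  have : Prod.mk x ⁻¹' {p : α × (Fin n → β) | ∀ j, p.2 j ∈ S p.1} = univ.pi fun _ => S x := by
    ext u
    simp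
  rw [this, Measure.pi_pi, Finset.prod_const, Finset.card_univ, Fintype.card_fin]

theorem ProbabilityTheory.iIndepFun.map_fin_prod_eq_prod_pi {Ω β : Type*} [MeasurableSpace Ω]
    [MeasurableSpace β] {P : Measure Ω} {X Y : ℕ → Ω → β}
    (hX : ∀ i, Measurable (X i)) (hY : ∀ j, Measurable (Y j))
    (h : iIndepFun (Sum.elim X Y) P) {μ ν : Measure β}
    (hμ : ∀ i, P.map (X i) = μ) (hν : ∀ j, P.map (Y j) = ν) (m n : ℕ) :
    P.map (fun ω => ((fun i : Fin m => X i ω), fun j : Fin n => Y j ω)) =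
      (Measure.pi fun _ : Fin m => μ).prod (Measure.pi fun _ : Fin n => ν) := by
  have := h.isProbabilityMeasure
  have : IsProbabilityMeasure μ := hμ 0 ▸ Measure.isProbabilityMeasure_map (hX 0).aemeasurable
  have : IsProbabilityMeasure ν := hν 0 ▸ Measure.isProbabilityMeasure_map (hY 0).aemeasurable
  let M : Fin m ⊕ Fin n → Measure β := Sum.elim (fun _ => μ) fun _ => ν
  have : ∀ i, SigmaFinite (M i) := by
    rintro (i | j) <;> dsimp only [M, Sum.elim_inl, Sum.elim_inr] <;> infer_instance
  let e : Fin m ⊕ Fin n → ℕ ⊕ ℕ := Sum.map (↑) (↑)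
  have hmeas : ∀ i, Measurable (Sum.elim X Y (e i)) := by
    rintro (i | j)
    exacts [hX i, hY j]
  have hpi : P.map (fun ω i => Sum.elim X Y (e i) ω) = Measure.pi M := by
    rw [(h.precomp (Fin.val_injective.sumMap Fin.val_injective)).map_fun_eq_pi_map
      fun i => (hmeas i).aemeasurable]
    congr 1
    funext i
    rcases i with i | j
    exacts [hμ i, hν j]
  refine Eq.trans ?_ (measurePreserving_sumPiEquivProdPi M).map_eq
  rw [← hpi, Measure.map_map (MeasurableEquiv.measurable _) (measurable_pi_lambda _ hmeas)]
  rfl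

theorem integral_one_sub_prod_mul_pow {μ : Measure ℝ} [IsProbabilityMeasure μ] {g : ℝ → ℝ}
    (hpow : ∀ j : ℕ, Integrable (fun t => t ^ j) μ)
    (hgpow : ∀ j : ℕ, Integrable (fun t => g t ^ j) μ) (k n : ℕ) :
    ∫ x : Fin (k + 1) → ℝ, (1 - (∏ i : Fin k, x i.castSucc) * g (x (Fin.last k))) ^ n
        ∂(Measure.pi fun _ => μ) =
      ∑ j ∈ Finset.range (n + 1),
        n.choose j * (-1) ^ j * (∫ t, t ^ j ∂μ) ^ k * ∫ t, g t ^ j ∂μ := by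
  let f (j : ℕ) : Fin (k + 1) → ℝ → ℝ := Fin.snoc (fun _ t => t ^ j) fun t => g t ^ j
  have hf : ∀ j (x : Fin (k + 1) → ℝ),
      ∏ i, f j i (x i) = (∏ i : Fin k, x i.castSucc) ^ j * g (x (Fin.last k)) ^ j := by
    intro j x
    simp [f, Fin.prod_univ_castSucc, Finset.prod_pow]
  have hexpand : ∀ x : Fin (k + 1) → ℝ,
      (1 - (∏ i : Fin k, x i.castSucc) * g (x (Fin.last k))) ^ n =
        ∑ j ∈ Finset.range (n + 1), n.choose j * (-1) ^ j * ∏ i, f j i (x i) := by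
    intro x
    rw [sub_eq_neg_add, add_pow]
    refine Finset.sum_congr rfl fun j _ => ?_
    rw [hf, neg_pow, mul_pow]
    ring
  have hint : ∀ j, Integrable (fun x : Fin (k + 1) → ℝ => ∏ i, f j i (x i))
      (Measure.pi fun _ => μ) := fun j =>
    Integrable.fintype_prod fun i => by
      induction i using Fin.lastCases <;> simp [f, hpow, hgpow]
  simp_rw [hexpand]
  rw [integral_finsetSum _ fun j _ => (hint j).const_mul _]
  refine Finset.sum_congr rfl fun j _ => ?_
  rw [integral_const_mul, integral_fintype_prod_eq_prod, Fin.prod_univ_castSucc]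
  simp [f, mul_assoc]

section SieveEvents

variable {Ω : Type*} {W U : ℕ → Ω → ℝ}

/-- Box `k + 1`, the interval `(Q_{k+1}, Q_k]`, receives none of the first `n` balls. -/
def emptyBoxEvent (W U : ℕ → Ω → ℝ) (n k : ℕ) : Set Ω :=
  {ω | ∀ j < n,
    U j ω ∉ Ioc ((∏ i ∈ Finset.range k, W i ω) * W k ω) (∏ i ∈ Finset.range k, W i ω)}

/-- The first `n` balls all land in boxes `1, …, k`. -/
def withinFirstBoxesEvent (W U : ℕ → Ω → ℝ) (n k : ℕ) : Set Ω :=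
  {ω | ∀ j < n, ∏ i ∈ Finset.range k, W i ω < U j ω}

theorem withinFirstBoxesEvent_subset_emptyBoxEvent (n k : ℕ) :
    withinFirstBoxesEvent W U n k ⊆ emptyBoxEvent W U n k :=
  fun _ hω j hj hmem => (hω j hj).not_ge hmem.2

variable [MeasurableSpace Ω] (hW : ∀ k, Measurable (W k)) (hU : ∀ j, Measurable (U j))
include hW hU

theorem measurableSet_emptyBoxEvent (n k : ℕ) : MeasurableSet (emptyBoxEvent W U n k) := by
  unfold emptyBoxEvent
  measurability

theorem measurableSet_withinFirstBoxesEvent (n k : ℕ) :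
    MeasurableSet (withinFirstBoxesEvent W U n k) := by
  unfold withinFirstBoxesEvent
  measurability

end SieveEvents

section BernoulliSieve

variable {Ω : Type*} [MeasureSpace Ω] [IsProbabilityMeasure (ℙ : Measure Ω)] {W U : ℕ → Ω → ℝ}
  (hW : ∀ k, Measurable (W k)) (hU : ∀ j, Measurable (U j))
  (hindep : iIndepFun (Sum.elim W U) ℙ) (hWid : ∀ k, Measure.map (W k) ℙ = Measure.map (W 0) ℙ)
  (hW01 : ∀ k, ∀ᵐ ω, W k ω ∈ Icc (0 : ℝ) 1)
  (hUunif : ∀ j, Measure.map (U j) ℙ = volume.restrict (Ioo (0 : ℝ) 1))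

include hW hU hindep hWid hUunif in
theorem measure_forall_mem_eq_lintegral (m n : ℕ) {S : (Fin m → ℝ) → Set ℝ}
    (hS : MeasurableSet {p : (Fin m → ℝ) × ℝ | p.2 ∈ S p.1}) :
    ℙ {ω | ∀ j < n, U j ω ∈ S fun i => W i ω} =
      ∫⁻ x, volume.restrict (Ioo (0 : ℝ) 1) (S x) ^ n
        ∂(Measure.pi fun _ => Measure.map (W 0) ℙ) := by
  have hevent : {ω | ∀ j < n, U j ω ∈ S fun i => W i ω} =
      (fun ω => ((fun i : Fin m => W i ω), fun j : Fin n => U j ω)) ⁻¹'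
        {p | ∀ j, p.2 j ∈ S p.1} := by
    ext ω
    simp [Fin.forall_iff]
  rw [hevent, ← Measure.map_apply (by fun_prop) (measurableSet_setOf_forall_mem hS),
    hindep.map_fin_prod_eq_prod_pi hW hU hWid hUunif, Measure.prod_pi_setOf_forall_mem _ _ _ hS]

include hW hU hindep hWid hW01 hUunif

theorem measureReal_forall_mem_eq_sum (k n : ℕ) {S : ℝ → ℝ → Set ℝ}
    (hS : MeasurableSet {p : ℝ × ℝ × ℝ | p.2.2 ∈ S p.1 p.2.1})
    {g : ℝ → ℝ} (hg : Measurable g) (hg01 : ∀ t ∈ Icc (0 : ℝ) 1, g t ∈ Icc (0 : ℝ) 1)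
    (hSg : ∀ q ∈ Icc (0 : ℝ) 1, ∀ w ∈ Icc (0 : ℝ) 1,
      volume.restrict (Ioo (0 : ℝ) 1) (S q w) = ENNReal.ofReal (1 - q * g w)) :
    (ℙ : Measure Ω).real {ω | ∀ j < n, U j ω ∈ S (∏ i ∈ Finset.range k, W i ω) (W k ω)} =
      ∑ j ∈ Finset.range (n + 1),
        n.choose j * (-1) ^ j * (∫ ω, W 0 ω ^ j) ^ k * ∫ ω, g (W 0 ω) ^ j := by
  set μ := Measure.map (W 0) ℙ
  have : IsProbabilityMeasure μ := Measure.isProbabilityMeasure_map (hW 0).aemeasurable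
  have hμ : ∀ᵐ t ∂μ, t ∈ Icc (0 : ℝ) 1 :=
    (ae_map_iff (hW 0).aemeasurable measurableSet_Icc).2 (hW01 0)
  have hμpi : ∀ᵐ x ∂(Measure.pi fun _ : Fin (k + 1) => μ), ∀ i, x i ∈ Icc (0 : ℝ) 1 :=
    ae_all_iff.2 fun i => Measure.tendsto_eval_ae_ae.eventually hμ
  let q (x : Fin (k + 1) → ℝ) : ℝ := ∏ i : Fin k, x i.castSucc
  have hq01 : ∀ x : Fin (k + 1) → ℝ, (∀ i, x i ∈ Icc (0 : ℝ) 1) → q x ∈ Icc (0 : ℝ) 1 :=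
    fun x hx => ⟨Finset.prod_nonneg fun i _ => (hx _).1,
      Finset.prod_le_one (fun i _ => (hx _).1) fun i _ => (hx _).2⟩
  have hbase : ∀ x : Fin (k + 1) → ℝ, (∀ i, x i ∈ Icc (0 : ℝ) 1) →
      0 ≤ 1 - q x * g (x (Fin.last k)) := fun x hx =>
    sub_nonneg.2 (mul_le_one₀ (hq01 x hx).2 (hg01 _ (hx _)).1 (hg01 _ (hx _)).2)
  let T (x : Fin (k + 1) → ℝ) : Set ℝ := S (q x) (x (Fin.last k))
  have hevent : {ω | ∀ j < n, U j ω ∈ S (∏ i ∈ Finset.range k, W i ω) (W k ω)} =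
      {ω | ∀ j < n, U j ω ∈ T fun i => W i ω} := by
    ext ω
    simp [T, q, Fin.prod_univ_eq_prod_range (fun i => W i ω)]
  have hT : MeasurableSet {p : (Fin (k + 1) → ℝ) × ℝ | p.2 ∈ T p.1} :=
    hS.preimage (f := fun p : (Fin (k + 1) → ℝ) × ℝ => (q p.1, p.1 (Fin.last k), p.2))
      (by fun_prop)
  have hgpow := integrable_pow_of_ae_mem_Icc hg.aestronglyMeasurable (hμ.mono hg01)
  calc (ℙ : Measure Ω).real {ω | ∀ j < n, U j ω ∈ S (∏ i ∈ Finset.range k, W i ω) (W k ω)}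
      = (∫⁻ x, ENNReal.ofReal ((1 - q x * g (x (Fin.last k))) ^ n)
          ∂(Measure.pi fun _ => μ)).toReal := by
        rw [measureReal_def, hevent,
          measure_forall_mem_eq_lintegral hW hU hindep hWid hUunif _ _ hT]
        congr 1
        refine lintegral_congr_ae ?_
        filter_upwards [hμpi] with x hx
        rw [hSg _ (hq01 x hx) _ (hx _), ← ENNReal.ofReal_pow (hbase x hx)]
    _ = ∫ x, (1 - q x * g (x (Fin.last k))) ^ n ∂(Measure.pi fun _ => μ) :=
        (integral_eq_lintegral_of_nonneg_ae
          (hμpi.mono fun x hx => pow_nonneg (hbase x hx) n) (by fun_prop)).symm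
    _ = ∑ j ∈ Finset.range (n + 1),
          n.choose j * (-1) ^ j * (∫ t, t ^ j ∂μ) ^ k * ∫ t, g t ^ j ∂μ :=
        integral_one_sub_prod_mul_pow
          (integrable_pow_of_ae_mem_Icc aestronglyMeasurable_id hμ) hgpow k n
    _ = _ := by
        refine Finset.sum_congr rfl fun j _ => ?_
        rw [integral_map (hW 0).aemeasurable (by fun_prop),
          integral_map (hW 0).aemeasurable (hgpow j).aestronglyMeasurable]

theorem measureReal_emptyBoxEvent (n k : ℕ) :
    (ℙ : Measure Ω).real (emptyBoxEvent W U n k) = ∑ j ∈ Finset.range (n + 1),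
      n.choose j * (-1) ^ j * (∫ ω, W 0 ω ^ j) ^ k * ∫ ω, (1 - W 0 ω) ^ j :=
  measureReal_forall_mem_eq_sum hW hU hindep hWid hW01 hUunif k n
    (S := fun q w => (Ioc (q * w) q)ᶜ) (g := fun t => 1 - t) (by measurability) (by fun_prop)
    (fun t ht => ⟨by linarith [ht.2], by linarith [ht.1]⟩) fun q hq w hw => by
      rw [prob_compl_eq_one_sub measurableSet_Ioc,
        volume_restrict_Ioo_zero_one_Ioc (mul_nonneg hq.1 hw.1) hq.2, ← ENNReal.ofReal_one,
        ← ENNReal.ofReal_sub _ (sub_nonneg.2 (mul_le_of_le_one_right hq.1 hw.2))]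
      ring_nf

theorem measureReal_withinFirstBoxesEvent (n k : ℕ) :
    (ℙ : Measure Ω).real (withinFirstBoxesEvent W U n k) =
      ∑ j ∈ Finset.range (n + 1), n.choose j * (-1) ^ j * (∫ ω, W 0 ω ^ j) ^ k := by
  have := measureReal_forall_mem_eq_sum hW hU hindep hWid hW01 hUunif k n
    (S := fun q _ => Ioi q) (g := fun _ => 1) (by measurability) measurable_const
    (fun _ _ => ⟨zero_le_one, le_rfl⟩)
    fun q hq _ _ => by rw [volume_restrict_Ioo_zero_one_Ioi hq.1, mul_one]
  simpa [withinFirstBoxesEvent] using this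

theorem ae_exists_mem_withinFirstBoxesEvent (hmom : ∀ j ≠ 0, ∫ ω, W 0 ω ^ j < 1) (n : ℕ) :
    ∀ᵐ ω, ∃ k, ω ∈ withinFirstBoxesEvent W U n k := by
  have hlim : Tendsto (fun k => (ℙ : Measure Ω).real (withinFirstBoxesEvent W U n k))
      atTop (𝓝 1) := by
    have hterm : ∀ j ∈ Finset.range n, Tendsto (fun k : ℕ =>
        (n.choose (j + 1) : ℝ) * (-1) ^ (j + 1) * (∫ ω, W 0 ω ^ (j + 1)) ^ k) atTop (𝓝 0) :=
      fun j _ => by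
        simpa using (tendsto_pow_atTop_nhds_zero_of_lt_one
          (integral_nonneg_of_ae ((hW01 0).mono fun ω hω => pow_nonneg hω.1 (j + 1)))
          (hmom (j + 1) j.succ_ne_zero)).const_mul ((n.choose (j + 1) : ℝ) * (-1) ^ (j + 1))
    simpa [measureReal_withinFirstBoxesEvent hW hU hindep hWid hW01 hUunif,
      Finset.sum_range_succ'] using (tendsto_finsetSum _ hterm).add_const 1
  have hunion : ℙ (⋃ k, withinFirstBoxesEvent W U n k) = 1 := by
    rw [← ENNReal.toReal_eq_one_iff, ← measureReal_def]
    exact le_antisymm measureReal_le_one (le_of_tendsto' hlim fun k =>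
      measureReal_mono (μ := (ℙ : Measure Ω)) (subset_iUnion (withinFirstBoxesEvent W U n) k))
  have hnull := measure_eq_zero_iff_ae_notMem.1 ((prob_compl_eq_zero_iff
    (.iUnion fun k => measurableSet_withinFirstBoxesEvent hW hU n k)).2 hunion)
  filter_upwards [hnull] with ω hω
  simpa using hω

theorem integral_sieveL_eq_tsum (hmom : ∀ j ≠ 0, ∫ ω, W 0 ω ^ j < 1) (n : ℕ) :
    ∫ ω, (sieveL (fun k => W k ω) (fun j => U j ω) n : ℝ) = ∑' k,
      ((ℙ : Measure Ω).real (emptyBoxEvent W U n k) -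
        (ℙ : Measure Ω).real (withinFirstBoxesEvent W U n k)) := by
  have hU1 : ∀ j, ∀ᵐ ω, U j ω ≤ 1 := fun j =>
    (ae_map_iff (hU j).aemeasurable measurableSet_Iic).1 <| by
      rw [hUunif j]
      exact ae_restrict_of_forall_mem measurableSet_Ioo fun t ht => ht.2.le
  have hdiff : ∀ k, (ℙ : Measure Ω).real (emptyBoxEvent W U n k) -
      (ℙ : Measure Ω).real (withinFirstBoxesEvent W U n k) =
        (ℙ : Measure Ω).real (emptyBoxEvent W U n k \ withinFirstBoxesEvent W U n k) := fun k =>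
    (measureReal_sdiff (withinFirstBoxesEvent_subset_emptyBoxEvent n k)
      (measurableSet_withinFirstBoxesEvent hW hU n k)).symm
  simp_rw [hdiff]
  refine integral_natCast_eq_tsum_measureReal (fun k =>
    (measurableSet_emptyBoxEvent hW hU n k).diff (measurableSet_withinFirstBoxesEvent hW hU n k)) ?_
  filter_upwards [ae_all_iff.2 hW01, ae_all_iff.2 hU1,
    ae_exists_mem_withinFirstBoxesEvent hW hU hindep hWid hW01 hUunif hmom n]
    with ω hWω hUω ⟨K, hK⟩
  rw [sieveL_eq_tsum hWω (fun j _ => hUω j) fun j hj => ⟨K, hK j hj⟩]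
  refine tsum_congr fun k => ?_
  simp only [indicator_apply, Set.mem_sdiff, emptyBoxEvent, withinFirstBoxesEvent, mem_ofPred_eq,
    Pi.one_apply]

end BernoulliSieve

theorem mean_empty_boxes_binomial_formula_general
    {Ω : Type*} [MeasureSpace Ω] [IsProbabilityMeasure (ℙ : Measure Ω)]
    (W U : ℕ → Ω → ℝ) (hWmeas : ∀ k, Measurable (W k)) (hUmeas : ∀ j, Measurable (U j))
    (hindep : iIndepFun (Sum.elim W U : ℕ ⊕ ℕ → Ω → ℝ) ℙ)
    (hWid : ∀ k, Measure.map (W k) ℙ = Measure.map (W 0) ℙ)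
    (hWval : ∀ k, ∀ᵐ ω ∂ℙ, W k ω ∈ Set.Ioo (0 : ℝ) 1)
    (hUunif : ∀ j, Measure.map (U j) ℙ = volume.restrict (Set.Ioo (0 : ℝ) 1))
    (n : ℕ) :
    (∫ ω, (sieveL (fun k => W k ω) (fun j => U j ω) n : ℝ) ∂ℙ) =
      ∑ k ∈ Finset.Icc 1 n, (-1 : ℝ) ^ (k + 1) * (n.choose k : ℝ) *
        (1 - ∫ ω, (1 - W 0 ω) ^ k ∂ℙ) / (1 - ∫ ω, (W 0 ω) ^ k ∂ℙ) := by
  have hW01 : ∀ k, ∀ᵐ ω, W k ω ∈ Icc (0 : ℝ) 1 := fun k =>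
    (hWval k).mono fun _ hω => Ioo_subset_Icc_self hω
  have hmom : ∀ j ≠ 0, ∫ ω, W 0 ω ^ j < 1 := fun _ hj =>
    integral_pow_lt_one (hWmeas 0).aestronglyMeasurable
      ((hWval 0).mono fun _ hω => Ioo_subset_Ico_self hω) hj
  rw [integral_sieveL_eq_tsum hWmeas hUmeas hindep hWid hW01 hUunif hmom]
  simp_rw [measureReal_emptyBoxEvent hWmeas hUmeas hindep hWid hW01 hUunif,
    measureReal_withinFirstBoxesEvent hWmeas hUmeas hindep hWid hW01 hUunif]
  exact tsum_sum_binomial_mul_geometric n (by simp) fun j hj =>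
    ⟨integral_nonneg_of_ae ((hW01 0).mono fun ω hω => pow_nonneg hω.1 j),
      hmom j (Nat.one_le_iff_ne_zero.1 (Finset.mem_Icc.1 hj).1)⟩

theorem mean_empty_boxes_binomial_formula
    {Ω : Type*} [MeasureSpace Ω] [IsProbabilityMeasure (ℙ : Measure Ω)]
    (W U : ℕ → Ω → ℝ) (hWmeas : ∀ k, Measurable (W k)) (hUmeas : ∀ j, Measurable (U j))
    (hindep : iIndepFun (Sum.elim W U : ℕ ⊕ ℕ → Ω → ℝ) ℙ)
    (hWid : ∀ k, Measure.map (W k) ℙ = Measure.map (W 0) ℙ)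
    (hWval : ∀ k, ∀ᵐ ω ∂ℙ, W k ω ∈ Set.Ioo (0 : ℝ) 1)
    (hUunif : ∀ j, Measure.map (U j) ℙ = volume.restrict (Set.Ioo (0 : ℝ) 1))
    (n : ℕ) (hn : 1 ≤ n) :
    (∫ ω, (sieveL (fun k => W k ω) (fun j => U j ω) n : ℝ) ∂ℙ) =
      ∑ k ∈ Finset.Icc 1 n, (-1 : ℝ) ^ (k + 1) * (n.choose k : ℝ) *
        (1 - ∫ ω, (1 - W 0 ω) ^ k ∂ℙ) / (1 - ∫ ω, (W 0 ω) ^ k ∂ℙ) :=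
  mean_empty_boxes_binomial_formula_general W U hWmeas hUmeas hindep hWid hWval hUunif n
end
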